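/- Let G be a finite p-group and M a G-module (an abelian group with G-action). If the group cohomology H^i(G, M) vanishes for all i ≥ 0, then multiplication by p is a bijection on M (i.e., M is uniquely p-divisible). -/

import Mathlib

/-!
A nonzero representation of a finite `p`-group on an abelian group of exponent `p` has a nonzero
invariant: the additive span of an orbit is a finite `𝔽_p`-space of order divisible by `p`, so its
fixed points, which include `0`, are at least `p` in number.

Since `H⁰(G, M) = M^G = 0`, the `p`-torsion `M[p]` has no invariants and hence vanishes, so
multiplication by `p` is injective. Then `0 → M → M → M/pM → 0` embeds `(M/pM)^G` into
`H¹(G, M) = 0`, and `M/pM`, also of exponent `p`, vanishes: multiplication by `p` is surjective.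
-/

universe u

namespace IsPGroup

variable {k G V : Type*} [CommRing k] [Group G] [AddCommGroup V] [Module k V]

theorem subsingleton_of_invariants_eq_bot {p : ℕ} [Fact p.Prime] [Finite G]
    (hG : IsPGroup p G) (ρ : Representation k G V) (hp : ∀ v : V, p • v = 0)
    (hinv : ρ.invariants = ⊥) : Subsingleton V := by
  refine subsingleton_of_forall_eq 0 fun v => by_contra fun hv => ?_
  have : Module (ZMod p) V := AddCommGroup.zmodModule hp
  let W : Submodule (ZMod p) V := .span (ZMod p) (Set.range fun g => ρ g v)
  have hW (g : G) {w : V} (hw : w ∈ W) : ρ g w ∈ W := by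
    have : W.map ((ρ g).toAddMonoidHom.toZModLinearMap p) ≤ W := by
      rw [Submodule.map_span_le]
      rintro _ ⟨h, rfl⟩
      exact Submodule.subset_span ⟨g * h, by simp⟩
    exact this ⟨w, hw, rfl⟩
  have : Module.Finite (ZMod p) W := .span_of_finite (ZMod p) (Set.finite_range _)
  have : Finite W := Module.finite_of_finite (ZMod p)
  let : MulAction G W :=
    { smul g w := ⟨ρ g w, hW g w.2⟩
      one_smul w := Subtype.ext (LinearMap.congr_fun (map_one ρ) w.1)
      mul_smul g h w := Subtype.ext (LinearMap.congr_fun (map_mul ρ g h) w.1) }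
  have hvW : v ∈ W := Submodule.subset_span ⟨1, by simp⟩
  have hcard : p ∣ Nat.card W := by
    have := addOrderOf_dvd_natCard (⟨v, hvW⟩ : W)
    rwa [addOrderOf_eq_prime (Subtype.ext (hp v)) (by simpa using hv)] at this
  obtain ⟨w, hw, hw0⟩ := hG.exists_fixed_point_of_prime_dvd_card_of_fixed_point W hcard
    (a := 0) fun g => Subtype.ext (map_zero (ρ g))
  have : (w : V) ∈ ρ.invariants := fun g => congrArg Subtype.val (hw g)
  rw [hinv, Submodule.mem_bot] at this
  exact hw0 (Subtype.ext this).symm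

end IsPGroup

namespace Representation

variable {k G V : Type*} [CommRing k] [Group G] [AddCommGroup V] [Module k V]
  (ρ : Representation k G V) (n : ℕ)

theorem ker_nsmul_le_comap (g : G) :
    LinearMap.ker (n • LinearMap.id) ≤ (LinearMap.ker (n • LinearMap.id : V →ₗ[k] V)).comap (ρ g) :=
  fun v (hv : n • v = 0) => show n • ρ g v = 0 by rw [← map_nsmul, hv, map_zero]

theorem range_nsmul_le_comap (g : G) :
    LinearMap.range (n • LinearMap.id) ≤
      (LinearMap.range (n • LinearMap.id : V →ₗ[k] V)).comap (ρ g) := by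
  rintro _ ⟨v, rfl⟩
  exact ⟨ρ g v, by simp⟩

end Representation

namespace groupCohomology

variable {k G : Type u} [CommRing k] [Group G] (A : Rep k G)

theorem invariants_eq_bot_of_subsingleton_H0 [Subsingleton (H0 A)] : A.ρ.invariants = ⊥ :=
  Submodule.subsingleton_iff_eq_bot.1 (H0Iso A).toLinearEquiv.symm.injective.subsingleton

/- The connecting map `H⁰(A/nA) → H¹(A)` by hand: an invariant class `m̄` gives the 1-cocycle
`g ↦ (g m - m) / n`, and a primitive `x` of it makes `m - n x` invariant. -/
theorem invariants_quotient_range_nsmul_eq_bot (n : ℕ) [Subsingleton (H1 A)]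
    (hinv : A.ρ.invariants = ⊥) (hinj : Function.Injective (fun v : A => n • v)) :
    (A.ρ.quotient _ (A.ρ.range_nsmul_le_comap n)).invariants = ⊥ := by
  refine (Submodule.eq_bot_iff _).2 fun q hq => ?_
  induction q using Submodule.Quotient.induction_on with | H m => ?_
  have (g : G) : ∃ c, n • c = A.ρ g m - m := (Submodule.Quotient.eq _).1 (hq g)
  choose c hc using this
  have hcoc : c ∈ cocycles₁ A := (mem_cocycles₁_iff c).2 fun g h => hinj <| by
    simp only [hc, smul_add, ← map_nsmul, map_mul, Module.End.mul_apply, map_sub]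
    abel
  obtain ⟨x, hx⟩ := (H1π_eq_zero_iff ⟨c, hcoc⟩).1 (Subsingleton.elim _ _)
  have : m - n • x ∈ A.ρ.invariants := fun g => by
    have hxg : A.ρ g x = x + c g := sub_eq_iff_eq_add'.1 (congrFun hx g)
    have hmg : A.ρ g m = m + n • c g := sub_eq_iff_eq_add'.1 (hc g).symm
    rw [map_sub, map_nsmul, hxg, hmg, smul_add]
    abel
  rw [hinv, Submodule.mem_bot, sub_eq_zero] at this
  exact (Submodule.Quotient.mk_eq_zero _).2 ⟨x, by simp [this]⟩

end groupCohomology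

namespace IsPGroup

open groupCohomology

variable {k G : Type u} [CommRing k] [Group G] [Finite G] {p : ℕ} [Fact p.Prime]
  (A : Rep k G)

theorem nsmul_injective_of_invariants_eq_bot (hG : IsPGroup p G) (hinv : A.ρ.invariants = ⊥) :
    Function.Injective (fun v : A => p • v) := by
  let T : Subrepresentation A.ρ := ⟨_, A.ρ.ker_nsmul_le_comap p⟩
  have : Subsingleton T.toSubmodule := by
    refine hG.subsingleton_of_invariants_eq_bot T.toRepresentation (fun v => Subtype.ext v.2)
      ((Submodule.eq_bot_iff _).2 fun v hv => Subtype.ext ?_)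
    rw [ZeroMemClass.coe_zero, ← Submodule.mem_bot k, ← hinv]
    exact fun g => congrArg Subtype.val (hv g)
  exact LinearMap.ker_eq_bot.1 (Submodule.subsingleton_iff_eq_bot.1 this)

theorem nsmul_surjective_of_subsingleton_H1 (hG : IsPGroup p G) [Subsingleton (H1 A)]
    (hinv : A.ρ.invariants = ⊥) (hinj : Function.Injective (fun v : A => p • v)) :
    Function.Surjective (fun v : A => p • v) := by
  have := hG.subsingleton_of_invariants_eq_bot _
    (fun q => q.induction_on fun m => (Submodule.Quotient.mk_eq_zero _).2 ⟨m, rfl⟩)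
    (invariants_quotient_range_nsmul_eq_bot A p hinv hinj)
  exact LinearMap.range_eq_top.1 (Submodule.Quotient.subsingleton_iff.1 this)

end IsPGroup

open groupCohomology

/-- If `G` is a finite `p`-group and `M` is a `G`-module all of whose cohomology groups
`H^i(G, M)` vanish, then multiplication by `p` is a bijection on `M`. -/
theorem stmt_0 (p : ℕ) [Fact p.Prime] (G : Type) [Group G] [Fintype G]
    (hG : IsPGroup p G) (M : Rep ℤ G)
    (hvan : ∀ i : ℕ, ∀ x : groupCohomology M i, x = 0) :
    Function.Bijective (fun m : M => p • m) := by
  have (i : ℕ) : Subsingleton (groupCohomology M i) :=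
    ⟨fun x y => (hvan i x).trans (hvan i y).symm⟩
  have hinv := invariants_eq_bot_of_subsingleton_H0 M
  have hinj := hG.nsmul_injective_of_invariants_eq_bot M hinv
  exact ⟨hinj, hG.nsmul_surjective_of_subsingleton_H1 M hinv hinj⟩
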